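/- arXiv:1610.04630 — 3 statements merged into one kernel-verified Lean document; each statement's English description precedes it below -/
import Mathlib

section
/- The fixed subalgebra H_n = {x ∈ K[N] : δ(x) = x} equals the ℚ-linear span of {e_{n,i} : 0 ≤ i ≤ p^n−1}; in particular H_n is a ℚ-subalgebra of K[N] of ℚ-dimension exactly p^n, with ℚ-basis {e_{n,i}}. -/
/-!
The `e_{n,i}` are the primitive idempotents of `K[N]` attached to the characters `σ ↦ ζ ^ i`,
so by orthogonality of characters they form a `K`-basis of `K[N]`. Since `τ (ζ ^ (i j)) =
ζ ^ (i π j)`, the map `δ` just reindexes the sum defining `e_{n,i}` by `j ↦ π j`, so it fixes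
each `e_{n,i}`; being `τ`-semilinear, it then acts on coordinates in this basis through `τ`.
Hence `x` is fixed iff all its coordinates are fixed by `τ`, and since `τ` generates
`Gal(K/ℚ) ≅ (ℤ/p^n)ˣ` this means that they are rational.
-/

open Finset MonoidAlgebra

theorem ZMod.sum_range_natCast {M : Type*} [AddCommMonoid M] (N : ℕ) [NeZero N]
    (f : ZMod N → M) : ∑ j ∈ range N, f j = ∑ z, f z :=
  sum_nbij' (fun j => (j : ZMod N)) ZMod.val (fun _ _ => mem_univ _)
    (fun z _ => mem_range.2 z.val_lt) (fun _ hj => ZMod.val_cast_of_lt (mem_range.1 hj))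
    (fun z _ => ZMod.natCast_zmod_val z) (fun _ _ => rfl)

theorem MonoidAlgebra.map_smul_of_map_single {K G F : Type*} [Semiring K]
    [FunLike F K[G] K[G]] [AddMonoidHomClass F K[G] K[G]] (δ : F) (τ : K →* K) (m : G → G)
    (hδ : ∀ g c, δ (single g c) = single (m g) (τ c)) (c : K) (x : K[G]) :
    δ (c • x) = τ c • δ x := by
  induction x using MonoidAlgebra.induction_linear with
  | zero => simp
  | add x y hx hy => rw [smul_add, map_add, hx, hy, map_add, smul_add]
  | single g a => rw [smul_single', hδ, hδ, map_mul, smul_single']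

theorem Module.Basis.map_eq_self_iff_mem_span {ι R K V F : Type*} [Fintype ι] [Field R]
    [Field K] [Algebra R K] [AddCommGroup V] [Module K V] [Module R V] [IsScalarTower R K V]
    [FunLike F V V] [AddMonoidHomClass F V V] (b : Basis ι K V) (τ : K →ₐ[R] K)
    (hτ : ∀ c, τ c = c → c ∈ Set.range (algebraMap R K)) (δ : F)
    (hδ : ∀ (c : K) x, δ (c • x) = τ c • δ x) (hb : ∀ i, δ (b i) = b i) (x : V) :
    δ x = x ↔ x ∈ Submodule.span R (Set.range b) := by
  have hδx : δ x = ∑ i, τ (b.repr x i) • b i := by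
    conv_lhs => rw [← b.sum_repr x]
    simp only [map_sum, hδ, hb]
  rw [b.mem_span_iff_repr_mem R, hδx, b.ext_elem_iff]
  simp only [b.repr_sum_self]
  refine forall_congr' fun i => ⟨hτ _, ?_⟩
  rintro ⟨q, hq⟩
  rw [← hq, τ.commutes]

theorem IsGalois.mem_range_algebraMap_of_zpowers_eq_top {F E : Type*} [Field F] [Field E]
    [Algebra F E] [IsGalois F E] [FiniteDimensional F E] {τ : Gal(E/F)}
    (hτ : Subgroup.zpowers τ = ⊤) {x : E} (hx : τ x = x) : x ∈ Set.range (algebraMap F E) := by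
  have hstab : Subgroup.zpowers τ ≤ MulAction.stabilizer Gal(E/F) x := Subgroup.zpowers_le.2 hx
  exact (IsGalois.mem_range_algebraMap_iff_fixed x).2 fun f => hstab (hτ ▸ Subgroup.mem_top f)

namespace IsPrimitiveRoot

variable {n : ℕ} [NeZero n]

theorem isCyclotomicExtension_of_adjoin_eq_top {A B : Type*} [CommRing A] [CommRing B]
    [Algebra A B] {ζ : B} (hζ : IsPrimitiveRoot ζ n) (h : Algebra.adjoin A {ζ} = ⊤) :
    IsCyclotomicExtension {n} A B := by
  refine (IsCyclotomicExtension.iff_singleton ..).2 ⟨⟨ζ, hζ⟩, fun x => ?_⟩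
  have hx : x ∈ Algebra.adjoin A {ζ} := by rw [h]; exact Algebra.mem_top
  have hle : ({ζ} : Set B) ⊆ {b : B | b ^ n = 1} := Set.singleton_subset_iff.2 hζ.pow_eq_one
  exact Algebra.adjoin_mono hle hx

theorem coe_autToPow_of_apply_eq_pow {F K : Type*} [CommRing F] [CommRing K] [IsDomain K]
    [Algebra F K] {ζ : K} (hζ : IsPrimitiveRoot ζ n) {τ : K ≃ₐ[F] K} {k : ℕ}
    (hτ : τ ζ = ζ ^ k) : (hζ.autToPow F τ : ZMod n) = k := by
  have h := hζ.autToPow_spec F τ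
  rw [hτ, (hζ.isOfFinOrder (NeZero.ne n)).pow_eq_pow_iff_modEq, ← hζ.eq_orderOf,
    ← ZMod.natCast_eq_natCast_iff, ZMod.natCast_zmod_val] at h
  exact h

theorem zpowers_eq_top_of_autToPow {F K : Type*} [Field F] [Field K] [Algebra F K]
    [IsCyclotomicExtension {n} F K] {ζ : K} (hζ : IsPrimitiveRoot ζ n) {τ : Gal(K/F)}
    (hτ : Subgroup.zpowers (hζ.autToPow F τ) = ⊤) : Subgroup.zpowers τ = ⊤ := by
  rw [← Subgroup.comap_map_eq_self_of_injective (hζ.autToPow_injective F) (Subgroup.zpowers τ),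
    MonoidHom.map_zpowers, hτ, Subgroup.comap_top]

theorem zmodChar_pow_injective {K : Type*} [CommMonoid K] {ζ : K} (hζ : IsPrimitiveRoot ζ n) :
    Function.Injective fun i : Fin n => AddChar.zmodChar n hζ.pow_eq_one ^ (i : ℕ) := by
  intro i j hij
  have h := DFunLike.congr_fun hij ((1 : ℕ) : ZMod n)
  simp only [AddChar.pow_apply, AddChar.zmodChar_apply', pow_one] at h
  exact Fin.ext (hζ.pow_inj i.isLt j.isLt h)

end IsPrimitiveRoot

namespace AddChar

variable {A K : Type*} [AddCommGroup A] [Fintype A] [Field K]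

noncomputable def fourierIdempotent (χ : AddChar A K) : K[Multiplicative A] :=
  ∑ a : A, single (Multiplicative.ofAdd a) ((Fintype.card A : K)⁻¹ * (χ a)⁻¹)

theorem lift_fourierIdempotent [NeZero (Fintype.card A : K)] (χ ψ : AddChar A K) :
    lift K K (Multiplicative A) ψ.toMonoidHom (fourierIdempotent χ) =
      if ψ = χ then 1 else 0 := by
  classical
  calc _ = (Fintype.card A : K)⁻¹ * ∑ a, (ψ * χ⁻¹) a := by
        simp only [fourierIdempotent, map_sum, lift_single, toMonoidHom_apply, smul_eq_mul,
          mul_sum, mul_apply, inv_apply', toAdd_ofAdd]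
        exact sum_congr rfl fun a _ => by ring
    _ = _ := by
        simp only [sum_eq_ite, ← one_eq_zero, mul_inv_eq_one]
        split_ifs
        exacts [inv_mul_cancel₀ (NeZero.ne _), mul_zero _]

theorem linearIndependent_fourierIdempotent {ι : Type*} [NeZero (Fintype.card A : K)]
    {χ : ι → AddChar A K} (hχ : Function.Injective χ) :
    LinearIndependent K fun i => fourierIdempotent (χ i) := by
  classical
  refine LinearIndependent.of_comp
    (LinearMap.pi fun k => (lift K K (Multiplicative A) (χ k).toMonoidHom).toLinearMap) ?_
  convert Pi.linearIndependent_single_one ι K with i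
  · ext k
    simp [lift_fourierIdempotent, hχ.eq_iff, Pi.single_apply]
  · rfl

noncomputable def fourierBasis {ι : Type*} [Fintype ι]
    [NeZero (Fintype.card A : K)] {χ : ι → AddChar A K} (hχ : Function.Injective χ)
    (hcard : Fintype.card ι = Fintype.card A) : Module.Basis ι K K[Multiplicative A] :=
  haveI := Module.Finite.of_basis (MonoidAlgebra.basis (Multiplicative A) K)
  basisOfLinearIndependentOfCardEqFinrank' _ (linearIndependent_fourierIdempotent hχ) <| by
    rw [Module.finrank_eq_card_basis (MonoidAlgebra.basis (Multiplicative A) K), hcard]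
    exact Fintype.card_congr Multiplicative.ofAdd

@[simp]
theorem fourierBasis_apply {ι : Type*} [Fintype ι]
    [NeZero (Fintype.card A : K)] {χ : ι → AddChar A K} (hχ : Function.Injective χ)
    (hcard : Fintype.card ι = Fintype.card A) (i : ι) :
    fourierBasis hχ hcard i = fourierIdempotent (χ i) :=
  congrFun (coe_basisOfLinearIndependentOfCardEqFinrank' ..) i

theorem map_fourierIdempotent {F : Type*} [FunLike F K[Multiplicative A] K[Multiplicative A]]
    [AddMonoidHomClass F K[Multiplicative A] K[Multiplicative A]] (δ : F) (τ : K →+* K)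
    {m : A → A} (hm : m.Bijective)
    (hδ : ∀ a c, δ (single (.ofAdd a) c) = single (.ofAdd (m a)) (τ c))
    {χ : AddChar A K} (hχ : ∀ a, τ (χ a) = χ (m a)) :
    δ (fourierIdempotent χ) = fourierIdempotent χ := by
  simp only [fourierIdempotent, map_sum, hδ, map_mul, map_inv₀, map_natCast, hχ]
  exact hm.sum_comp fun a => single (Multiplicative.ofAdd a) ((Fintype.card A : K)⁻¹ * (χ a)⁻¹)

variable {N : ℕ} [NeZero N] {ζ : K} (h : ζ ^ N = 1)

theorem fourierIdempotent_zmodChar_pow (i : ℕ) :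
    fourierIdempotent (zmodChar N h ^ i) =
      (N : K)⁻¹ • ∑ j ∈ range N, single (.ofAdd (j : ZMod N)) (ζ ^ (i * j))⁻¹ := by
  simp only [fourierIdempotent, ZMod.card, smul_sum, smul_single']
  rw [← ZMod.sum_range_natCast]
  simp only [pow_apply, zmodChar_apply', ← pow_mul, mul_comm]

theorem map_zmodChar_pow_apply {F : Type*} [FunLike F K K] [MonoidHomClass F K K] (τ : F)
    {k : ℕ} (hτ : τ ζ = ζ ^ k) (i : ℕ) (a : ZMod N) :
    τ ((zmodChar N h ^ i) a) = (zmodChar N h ^ i) (k • a) := by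
  rw [map_nsmul_eq_pow, pow_apply, zmodChar_apply, map_pow, map_pow, hτ]
  ring

end AddChar

theorem stmt_2_general (p n : ℕ) (hp : p.Prime)
    (K : Type*) [Field K] [Algebra ℚ K]
    (ζ : K) (hζ : IsPrimitiveRoot ζ (p ^ n))
    (hK : Algebra.adjoin ℚ {ζ} = ⊤)
    (π : ℕ)
    (hπ : ∃ u : (ZMod (p ^ n))ˣ, (u : ZMod (p ^ n)) = (π : ZMod (p ^ n)) ∧
      ∀ v : (ZMod (p ^ n))ˣ, ∃ k : ℕ, v = u ^ k)
    (τ : K ≃ₐ[ℚ] K) (hτ : τ ζ = ζ ^ π)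
    (σ : Multiplicative (ZMod (p ^ n))) (hσ : σ = Multiplicative.ofAdd (1 : ZMod (p ^ n)))
    (δ : MonoidAlgebra K (Multiplicative (ZMod (p ^ n))) ≃ₐ[ℚ]
        MonoidAlgebra K (Multiplicative (ZMod (p ^ n))))
    (hδ : ∀ (g : Multiplicative (ZMod (p ^ n))) (c : K),
      δ (MonoidAlgebra.single g c) = MonoidAlgebra.single (g ^ π) (τ c))
    (e : ℕ → MonoidAlgebra K (Multiplicative (ZMod (p ^ n))))
    (he : ∀ i, e i = ((p : K) ^ n)⁻¹ •
      ∑ j ∈ Finset.range (p ^ n), MonoidAlgebra.single (σ ^ j) ((ζ ^ (i * j))⁻¹)) :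
    (∀ x, δ x = x ↔
      x ∈ Submodule.span ℚ (Set.range fun i : Fin (p ^ n) => e (i : ℕ))) ∧
    Module.finrank ℚ ↥(Submodule.span ℚ (Set.range fun i : Fin (p ^ n) => e (i : ℕ))) = p ^ n ∧
    ∃ b : Module.Basis (Fin (p ^ n)) ℚ
        ↥(Submodule.span ℚ (Set.range fun i : Fin (p ^ n) => e (i : ℕ))),
      ∀ i : Fin (p ^ n),
        (b i : MonoidAlgebra K (Multiplicative (ZMod (p ^ n)))) = e (i : ℕ) := by
  have : NeZero (p ^ n) := ⟨pow_ne_zero n hp.ne_zero⟩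
  have := hζ.neZero' (R := K)
  have := hζ.isCyclotomicExtension_of_adjoin_eq_top hK
  have := IsCyclotomicExtension.finiteDimensional {p ^ n} ℚ K
  have := IsCyclotomicExtension.isGalois {p ^ n} ℚ K
  obtain ⟨u, hu, hu_gen⟩ := hπ
  have hτ_gen : Subgroup.zpowers τ = ⊤ := by
    refine hζ.zpowers_eq_top_of_autToPow (eq_top_iff.2 fun v _ => ?_)
    obtain ⟨k, rfl⟩ := hu_gen v
    rw [Units.ext ((hζ.coe_autToPow_of_apply_eq_pow hτ).trans hu.symm)]
    exact ⟨k, zpow_natCast u k⟩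
  have hπ_bij : Function.Bijective fun a : ZMod (p ^ n) => π • a := by
    convert (Units.mulLeft u).bijective with a
    rw [Units.mulLeft_apply, hu, nsmul_eq_mul]
  have hδ_ofAdd (a : ZMod (p ^ n)) (c : K) :
      δ (single (.ofAdd a) c) = single (.ofAdd (π • a)) (τ c) := by
    rw [hδ, ofAdd_nsmul]
  have : NeZero (Fintype.card (ZMod (p ^ n)) : K) := by rwa [ZMod.card]
  set b := AddChar.fourierBasis hζ.zmodChar_pow_injective (by simp) with hb_def
  have hb : ⇑b = fun i : Fin (p ^ n) => e i := by
    ext1 i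
    rw [hb_def, AddChar.fourierBasis_apply, AddChar.fourierIdempotent_zmodChar_pow, he, hσ]
    simp only [← ofAdd_nsmul, nsmul_one, Nat.cast_pow]
  rw [← hb]
  refine ⟨b.map_eq_self_iff_mem_span τ.toAlgHom
      (fun _ => IsGalois.mem_range_algebraMap_of_zpowers_eq_top hτ_gen) δ
      (map_smul_of_map_single δ τ.toMonoidHom _ hδ)
      (fun i => ?_), ?_, b.restrictScalars ℚ,
      fun i => (b.restrictScalars_apply ℚ i).trans (congrFun hb i)⟩
  · rw [hb_def, AddChar.fourierBasis_apply]
    exact AddChar.map_fourierIdempotent δ τ.toRingHom hπ_bij hδ_ofAdd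
      (AddChar.map_zmodChar_pow_apply _ τ hτ i)
  · rw [Module.finrank_eq_card_basis (b.restrictScalars ℚ), Fintype.card_fin]

/-- The fixed subalgebra `H_n = {x ∈ K[N] : δ(x) = x}` equals the ℚ-linear span of
the `e_{n,i}`; in particular it has ℚ-dimension exactly `p^n`, with ℚ-basis `{e_{n,i}}`. -/
theorem stmt_2 (p n : ℕ) (hp : p.Prime) (hp2 : p ≠ 2) (hn : 1 ≤ n)
    (K : Type*) [Field K] [Algebra ℚ K]
    (ζ : K) (hζ : IsPrimitiveRoot ζ (p ^ n))
    (hK : Algebra.adjoin ℚ {ζ} = ⊤)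
    (π : ℕ)
    (hπ : ∃ u : (ZMod (p ^ n))ˣ, (u : ZMod (p ^ n)) = (π : ZMod (p ^ n)) ∧
      ∀ v : (ZMod (p ^ n))ˣ, ∃ k : ℕ, v = u ^ k)
    (τ : K ≃ₐ[ℚ] K) (hτ : τ ζ = ζ ^ π)
    (σ : Multiplicative (ZMod (p ^ n))) (hσ : σ = Multiplicative.ofAdd (1 : ZMod (p ^ n)))
    (δ : MonoidAlgebra K (Multiplicative (ZMod (p ^ n))) ≃ₐ[ℚ]
        MonoidAlgebra K (Multiplicative (ZMod (p ^ n))))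
    (hδ : ∀ (g : Multiplicative (ZMod (p ^ n))) (c : K),
      δ (MonoidAlgebra.single g c) = MonoidAlgebra.single (g ^ π) (τ c))
    (e : ℕ → MonoidAlgebra K (Multiplicative (ZMod (p ^ n))))
    (he : ∀ i, e i = ((p : K) ^ n)⁻¹ •
      ∑ j ∈ Finset.range (p ^ n), MonoidAlgebra.single (σ ^ j) ((ζ ^ (i * j))⁻¹)) :
    (∀ x, δ x = x ↔
      x ∈ Submodule.span ℚ (Set.range fun i : Fin (p ^ n) => e (i : ℕ))) ∧
    Module.finrank ℚ ↥(Submodule.span ℚ (Set.range fun i : Fin (p ^ n) => e (i : ℕ))) = p ^ n ∧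
    ∃ b : Module.Basis (Fin (p ^ n)) ℚ
        ↥(Submodule.span ℚ (Set.range fun i : Fin (p ^ n) => e (i : ℕ))),
      ∀ i : Fin (p ^ n),
        (b i : MonoidAlgebra K (Multiplicative (ZMod (p ^ n)))) = e (i : ℕ) :=
  stmt_2_general p n hp K ζ hζ hK π hπ τ hτ σ hσ δ hδ e he
end

section
/- An element (γ_n)_{n≥1} ∈ A is fixed by the action of every τ ∈ Gal(K_∞/ℚ) if and only if γ_n ∈ H_n for all n; that is, the fixed subalgebra A^{Gal(K_∞/ℚ)} equals H_∞. -/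
/-!
For `m = p ^ (n + 1)` the elements `e_i` (`i < m`) form a `K`-basis of `K[ℤ/m]`: by orthogonality
of the characters `σ ↦ ζ^i`, evaluation at the `i`-th character is the `i`-th coordinate. Each
`τ ∈ Gal(K/ℚ)` acts `τ`-semilinearly and fixes every `e_i`, because `τ(ζ) = ζ^c` with `c` prime
to `m` and `σ^j ↦ σ^{cj}` just permutes the summands of `e_i`. So `τ` acts on coordinates by
applying `τ`, and an element is fixed by all of `Gal(K/ℚ)` iff its coordinates are, i.e. lie in
`ℚ`: `K/ℚ` is generated by roots of unity, hence Galois.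
-/

open Finset MonoidAlgebra

theorem isCyclotomicExtension_range_of_adjoin_eq_top {F K ι : Type*} [CommRing F] [CommRing K]
    [Algebra F K] {k : ι → ℕ} (hk : ∀ i, k i ≠ 0) {ζ : ι → K}
    (hζ : ∀ i, IsPrimitiveRoot (ζ i) (k i)) (hK : Algebra.adjoin F (Set.range ζ) = ⊤) :
    IsCyclotomicExtension (Set.range k) F K := by
  rw [IsCyclotomicExtension.iff_adjoin_eq_top]
  refine ⟨?_, eq_top_mono (Algebra.adjoin_mono ?_) hK⟩
  · rintro _ ⟨i, rfl⟩ -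
    exact ⟨ζ i, hζ i⟩
  · rintro _ ⟨i, rfl⟩
    exact ⟨k i, ⟨i, rfl⟩, hk i, (hζ i).pow_eq_one⟩

section Fourier

variable {K : Type*} [Field K] {m : ℕ} {ζ : K}

theorem IsPrimitiveRoot.sum_pow_mul_inv_pow (hζ : IsPrimitiveRoot ζ m) {i k : ℕ} (hi : i < m)
    (hk : k < m) :
    ∑ j ∈ range m, ζ ^ (i * j) * (ζ ^ (k * j))⁻¹ = if i = k then (m : K) else 0 := by
  have hζ0 : ζ ≠ 0 := hζ.ne_zero (by omega)
  split_ifs with hik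
  · subst hik
    simp [hζ0]
  · have hx : ζ ^ i * (ζ ^ k)⁻¹ ≠ 1 := fun h =>
      hik (hζ.pow_inj hi hk ((mul_inv_eq_one₀ (pow_ne_zero k hζ0)).mp h))
    have hterm (j : ℕ) : ζ ^ (i * j) * (ζ ^ (k * j))⁻¹ = (ζ ^ i * (ζ ^ k)⁻¹) ^ j := by
      rw [mul_pow, inv_pow, pow_mul, pow_mul]
    rw [sum_congr rfl fun j _ => hterm j, geom_sum_eq hx, mul_pow, inv_pow, pow_right_comm,
      pow_right_comm ζ k, hζ.pow_eq_one, one_pow, one_pow, inv_one, mul_one, sub_self, zero_div]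

noncomputable def fourierIdempotent (ζ : K) (m i : ℕ) :
    MonoidAlgebra K (Multiplicative (ZMod m)) :=
  (m : K)⁻¹ • ∑ j ∈ range m, single (Multiplicative.ofAdd (1 : ZMod m) ^ j) (ζ ^ (i * j))⁻¹

variable [NeZero m]

noncomputable def zmodCharEval (hζ : ζ ^ m = 1) (i : ℕ) :
    MonoidAlgebra K (Multiplicative (ZMod m)) →ₐ[K] K :=
  lift K K _ (AddChar.zmodChar m (ζ := ζ ^ i)
    (by rw [pow_right_comm, hζ, one_pow])).toMonoidHom

theorem zmodCharEval_single_ofAdd_one_pow (hζ : ζ ^ m = 1) (i j : ℕ) (c : K) :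
    zmodCharEval hζ i (single (Multiplicative.ofAdd (1 : ZMod m) ^ j) c) = c * ζ ^ (i * j) := by
  rw [zmodCharEval, lift_single, AddChar.toMonoidHom_apply, toAdd_pow, toAdd_ofAdd, nsmul_one,
    AddChar.zmodChar_apply', smul_eq_mul, pow_mul]

theorem zmodCharEval_fourierIdempotent (hζ : IsPrimitiveRoot ζ m) {i k : ℕ} (hi : i < m)
    (hk : k < m) :
    zmodCharEval hζ.pow_eq_one i (fourierIdempotent ζ m k) = if i = k then 1 else 0 := by
  simp_rw [fourierIdempotent, map_smul, map_sum, zmodCharEval_single_ofAdd_one_pow,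
    mul_comm _ (ζ ^ (i * _)), hζ.sum_pow_mul_inv_pow hi hk, smul_eq_mul, mul_ite, mul_zero,
    inv_mul_cancel₀ hζ.neZero'.out]

theorem zmodCharEval_sum_smul_fourierIdempotent (hζ : IsPrimitiveRoot ζ m) (a : Fin m → K)
    (i : Fin m) :
    zmodCharEval hζ.pow_eq_one i (∑ j, a j • fourierIdempotent ζ m j) = a i := by
  simp [zmodCharEval_fourierIdempotent hζ i.isLt (Fin.isLt _), Fin.val_inj]

theorem linearIndependent_fourierIdempotent (hζ : IsPrimitiveRoot ζ m) :
    LinearIndependent K fun i : Fin m => fourierIdempotent ζ m i :=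
  Fintype.linearIndependent_iff.mpr fun a ha i => by
    simpa [ha] using (zmodCharEval_sum_smul_fourierIdempotent hζ a i).symm

theorem span_fourierIdempotent_eq_top (hζ : IsPrimitiveRoot ζ m) :
    Submodule.span K (Set.range fun i : Fin m => fourierIdempotent ζ m i) = ⊤ :=
  (linearIndependent_fourierIdempotent hζ).span_eq_top_of_card_eq_finrank' <| by
    rw [Module.finrank_eq_card_basis (MonoidAlgebra.basis _ K)]; simp

theorem sum_range_ofAdd_one_pow {M : Type*} [AddCommMonoid M]
    (f : Multiplicative (ZMod m) → M) :
    ∑ j ∈ range m, f (Multiplicative.ofAdd 1 ^ j) = ∑ g, f g := by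
  refine sum_nbij' (fun j => Multiplicative.ofAdd 1 ^ j) (fun g => g.toAdd.val)
    (fun _ _ => mem_univ _) (fun g _ => mem_range.mpr (ZMod.val_lt _)) (fun j hj => ?_)
    (fun g _ => ?_) fun _ _ => rfl
  · simp [ZMod.val_cast_of_lt (mem_range.mp hj)]
  · apply Multiplicative.toAdd.injective
    simp

theorem fourierIdempotent_eq_sum_univ (hζ : ζ ^ m = 1) (k : ℕ) :
    fourierIdempotent ζ m k =
      (m : K)⁻¹ • ∑ g : Multiplicative (ZMod m), single g (ζ ^ (k * g.toAdd.val))⁻¹ := by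
  rw [fourierIdempotent, ← sum_range_ofAdd_one_pow]
  congr 1
  refine sum_congr rfl fun j _ => ?_
  rw [toAdd_pow, toAdd_ofAdd, nsmul_one, ZMod.val_natCast, pow_mul, pow_mul,
    ← pow_eq_pow_mod j (by rw [pow_right_comm, hζ, one_pow])]

theorem pow_mul_val_nsmul (hζ : ζ ^ m = 1) (k c : ℕ) (a : ZMod m) :
    ζ ^ (k * (c • a).val) = (ζ ^ (k * a.val)) ^ c := by
  have hk : (ζ ^ k) ^ m = 1 := by rw [pow_right_comm, hζ, one_pow]
  simpa only [AddChar.zmodChar_apply, pow_mul] using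
    AddChar.map_nsmul_eq_pow (AddChar.zmodChar m hk) c a

end Fourier

section GaloisAction

variable {F K : Type*} [Field F] [Field K] [Algebra F K]

theorem map_smul_of_map_single {G : Type*} [Monoid G] {τ : K ≃ₐ[F] K} {c : ℕ}
    (S : MonoidAlgebra K G ≃ₐ[F] MonoidAlgebra K G)
    (hS : ∀ g x, S (single g x) = single (g ^ c) (τ x)) (a : K) (x : MonoidAlgebra K G) :
    S (a • x) = τ a • S x := by
  rw [Algebra.smul_def, Algebra.smul_def, map_mul, MonoidAlgebra.coe_algebraMap]
  simp [hS]

variable {m : ℕ} [NeZero m] {ζ : K}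

theorem map_fourierIdempotent_of_map_single (hζ : ζ ^ m = 1) {τ : K ≃ₐ[F] K} {c : ℕ}
    (hτ : τ ζ = ζ ^ c) (hc : c.Coprime m)
    (S : MonoidAlgebra K (Multiplicative (ZMod m)) ≃ₐ[F] MonoidAlgebra K (Multiplicative (ZMod m)))
    (hS : ∀ g x, S (single g x) = single (g ^ c) (τ x)) (k : ℕ) :
    S (fourierIdempotent ζ m k) = fourierIdempotent ζ m k := by
  have hterm (g : Multiplicative (ZMod m)) :
      S (single g (ζ ^ (k * g.toAdd.val))⁻¹) =
        single (g ^ c) (ζ ^ (k * (g ^ c).toAdd.val))⁻¹ := by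
    rw [hS, map_inv₀, map_pow, hτ, toAdd_pow, pow_mul_val_nsmul hζ, ← pow_mul, ← pow_mul,
      mul_comm c]
  have hcard : (Nat.card (Multiplicative (ZMod m))).Coprime c := by simpa using hc.symm
  rw [fourierIdempotent_eq_sum_univ hζ, map_smul_of_map_single S hS, map_sum, map_inv₀,
    map_natCast]
  simp_rw [hterm]
  exact congrArg _ <|
    Equiv.sum_comp (powCoprime hcard) fun g => single g (ζ ^ (k * g.toAdd.val))⁻¹

theorem forall_map_eq_self_iff_mem_span_fourierIdempotent [IsGalois F K]
    (hζ : IsPrimitiveRoot ζ m)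
    (T : (K ≃ₐ[F] K) → MonoidAlgebra K (Multiplicative (ZMod m)) ≃ₐ[F]
      MonoidAlgebra K (Multiplicative (ZMod m)))
    (hT : ∀ τ c, τ ζ = ζ ^ c → ∀ g x, T τ (single g x) = single (g ^ c) (τ x))
    (x : MonoidAlgebra K (Multiplicative (ZMod m))) :
    (∀ τ, T τ x = x) ↔
      x ∈ Submodule.span F (Set.range fun i : Fin m => fourierIdempotent ζ m i) := by
  have hexp (τ : K ≃ₐ[F] K) : ∃ c, c.Coprime m ∧ τ ζ = ζ ^ c := by
    obtain ⟨c, -, hc, hτ⟩ := hζ.isPrimitiveRoot_iff.mp (hζ.map_of_injective τ.injective)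
    exact ⟨c, hc, hτ.symm⟩
  have hfix (τ) (i : ℕ) : T τ (fourierIdempotent ζ m i) = fourierIdempotent ζ m i := by
    obtain ⟨c, hc, hτ⟩ := hexp τ
    exact map_fourierIdempotent_of_map_single hζ.pow_eq_one hτ hc (T τ) (hT τ c hτ) i
  constructor
  · intro hx
    obtain ⟨a, rfl⟩ := (Submodule.mem_span_range_iff_exists_fun K).mp
      (span_fourierIdempotent_eq_top hζ ▸ Submodule.mem_top (x := x))
    have hrat (i : Fin m) : a i ∈ Set.range (algebraMap F K) := by
      refine (InfiniteGalois.mem_range_algebraMap_iff_fixed _).mpr fun τ => ?_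
      obtain ⟨c, -, hτ⟩ := hexp τ
      have hmap : T τ (∑ j, a j • fourierIdempotent ζ m j) =
          ∑ j, τ (a j) • fourierIdempotent ζ m j := by
        simp_rw [map_sum, map_smul_of_map_single (T τ) (hT τ c hτ), hfix]
      have hcoeff := congrArg (zmodCharEval hζ.pow_eq_one i) (hmap.symm.trans (hx τ))
      rwa [zmodCharEval_sum_smul_fourierIdempotent hζ (fun j => τ (a j)),
        zmodCharEval_sum_smul_fourierIdempotent hζ] at hcoeff
    choose q hq using hrat
    simp_rw [← hq, algebraMap_smul]
    exact Submodule.sum_mem _ fun i _ => Submodule.smul_mem _ _ (Submodule.subset_span ⟨i, rfl⟩)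
  · intro hx τ
    refine (Submodule.span_le (p := LinearMap.eqLocus (T τ).toLinearMap LinearMap.id)).mpr ?_ hx
    rintro _ ⟨i, rfl⟩
    exact hfix τ i

end GaloisAction

theorem stmt_13_general (p : ℕ) (hp : p.Prime)
    (K : Type*) [Field K] [Algebra ℚ K]
    (ζ : ℕ → K) (hζ : ∀ n : ℕ, IsPrimitiveRoot (ζ n) (p ^ (n + 1)))
    (hK : Algebra.adjoin ℚ (Set.range ζ) = ⊤)
    (e : ∀ n : ℕ, ℕ → MonoidAlgebra K (Multiplicative (ZMod (p ^ (n + 1)))))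
    (he : ∀ n i, e n i = ((p : K) ^ (n + 1))⁻¹ •
      ∑ j ∈ Finset.range (p ^ (n + 1)),
        MonoidAlgebra.single ((Multiplicative.ofAdd (1 : ZMod (p ^ (n + 1)))) ^ j)
          ((ζ n ^ (i * j))⁻¹))
    (ν : ∀ n : ℕ, MonoidAlgebra K (Multiplicative (ZMod (p ^ (n + 2)))) →ₐ[K]
        MonoidAlgebra K (Multiplicative (ZMod (p ^ (n + 1)))))
    (T : (K ≃ₐ[ℚ] K) → ∀ n : ℕ,
      MonoidAlgebra K (Multiplicative (ZMod (p ^ (n + 1)))) ≃ₐ[ℚ]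
        MonoidAlgebra K (Multiplicative (ZMod (p ^ (n + 1)))))
    (hT : ∀ (τ : K ≃ₐ[ℚ] K) (n c : ℕ), τ (ζ n) = ζ n ^ c →
      ∀ (g : Multiplicative (ZMod (p ^ (n + 1)))) (x : K),
        T τ n (MonoidAlgebra.single g x) = MonoidAlgebra.single (g ^ c) (τ x)) :
    ∀ γ : ∀ n : ℕ, MonoidAlgebra K (Multiplicative (ZMod (p ^ (n + 1)))),
      (∀ n, ν n (γ (n + 1)) = γ n) →
      ((∀ (τ : K ≃ₐ[ℚ] K) (n : ℕ), T τ n (γ n) = γ n) ↔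
        ∀ n, γ n ∈ Submodule.span ℚ (Set.range fun i : Fin (p ^ (n + 1)) => e n (i : ℕ))) := by
  intro γ _
  have hpow (n : ℕ) : p ^ (n + 1) ≠ 0 := pow_ne_zero _ hp.ne_zero
  have := isCyclotomicExtension_range_of_adjoin_eq_top hpow hζ hK
  have := IsCyclotomicExtension.isGalois (Set.range fun n => p ^ (n + 1)) ℚ K
  obtain rfl : e = fun n => fourierIdempotent (ζ n) (p ^ (n + 1)) := by
    funext n i
    rw [he, fourierIdempotent, Nat.cast_pow]
  rw [forall_comm]
  refine forall_congr' fun n => ?_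
  have := NeZero.mk (hpow n)
  exact forall_map_eq_self_iff_mem_span_fourierIdempotent (hζ n) (T · n) (hT · n) (γ n)

/-- An element `(γ_n)_{n≥1} ∈ A` is fixed by the (diagonal) action of every
`τ ∈ Gal(K_∞/ℚ)` if and only if `γ_n ∈ H_n` for all `n`; that is, the fixed subalgebra
`A^{Gal(K_∞/ℚ)}` equals `H_∞`.  Here `τ` acts on `K_∞[N_n]` by applying `τ` to coefficients
and sending `σ_n^j ↦ σ_n^{c_n(τ)·j}`, where `τ(ζ_n) = ζ_n^{c_n(τ)}`. -/
theorem stmt_13 (p : ℕ) (hp : p.Prime) (hp2 : p ≠ 2)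
    (K : Type*) [Field K] [Algebra ℚ K]
    (ζ : ℕ → K) (hζ : ∀ n : ℕ, IsPrimitiveRoot (ζ n) (p ^ (n + 1)))
    (hcompat : ∀ n : ℕ, ζ (n + 1) ^ p = ζ n)
    (hK : Algebra.adjoin ℚ (Set.range ζ) = ⊤)
    (e : ∀ n : ℕ, ℕ → MonoidAlgebra K (Multiplicative (ZMod (p ^ (n + 1)))))
    (he : ∀ n i, e n i = ((p : K) ^ (n + 1))⁻¹ •
      ∑ j ∈ Finset.range (p ^ (n + 1)),
        MonoidAlgebra.single ((Multiplicative.ofAdd (1 : ZMod (p ^ (n + 1)))) ^ j)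
          ((ζ n ^ (i * j))⁻¹))
    (ν : ∀ n : ℕ, MonoidAlgebra K (Multiplicative (ZMod (p ^ (n + 2)))) →ₐ[K]
        MonoidAlgebra K (Multiplicative (ZMod (p ^ (n + 1)))))
    (hν : ∀ (n j : ℕ) (c : K),
      ν n (MonoidAlgebra.single ((Multiplicative.ofAdd (1 : ZMod (p ^ (n + 2)))) ^ j) c) =
        MonoidAlgebra.single ((Multiplicative.ofAdd (1 : ZMod (p ^ (n + 1)))) ^ j) c)
    (T : (K ≃ₐ[ℚ] K) → ∀ n : ℕ,
      MonoidAlgebra K (Multiplicative (ZMod (p ^ (n + 1)))) ≃ₐ[ℚ]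
        MonoidAlgebra K (Multiplicative (ZMod (p ^ (n + 1)))))
    (hT : ∀ (τ : K ≃ₐ[ℚ] K) (n c : ℕ), τ (ζ n) = ζ n ^ c →
      ∀ (g : Multiplicative (ZMod (p ^ (n + 1)))) (x : K),
        T τ n (MonoidAlgebra.single g x) = MonoidAlgebra.single (g ^ c) (τ x)) :
    ∀ γ : ∀ n : ℕ, MonoidAlgebra K (Multiplicative (ZMod (p ^ (n + 1)))),
      (∀ n, ν n (γ (n + 1)) = γ n) →
      ((∀ (τ : K ≃ₐ[ℚ] K) (n : ℕ), T τ n (γ n) = γ n) ↔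
        ∀ n, γ n ∈ Submodule.span ℚ (Set.range fun i : Fin (p ^ (n + 1)) => e n (i : ℕ))) :=
  stmt_13_general p hp K ζ hζ hK e he ν T hT
end

section
/- The subgroup Gal(L/ℚ(ζ_1)) of Gal(L/ℚ), consisting of the automorphisms of L fixing ζ_1 := ζ^{p^{n−1}}, is a Sylow p-subgroup of Gal(L/ℚ); it has order p^{2n−1} and index p−1. -/
/-!
`Gal(L/ℚ)` has order `[L : ℚ] = φ(p^n) p^n = p^(2n-1) (p-1)`, and the subgroup fixing `ℚ(ζ₁)` has
index `[ℚ(ζ₁) : ℚ] = p - 1`, so its order is the full `p`-part of the group order.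

The degree count rests on the irreducibility of `X^(p^n) - a` over `ℚ(ζ)`, which for odd `p`
reduces to `a` not being a `p`-th power in `ℚ(ζ)`. If `b^p = a` with `b ∈ ℚ(ζ)`, then `ℚ(b)`, a
subfield of an abelian extension, is normal of degree `p`; it therefore contains every root of
`X^p - a`, hence a primitive `p`-th root of unity, whose degree `p - 1` cannot divide `p`.
-/

open Polynomial IntermediateField

theorem IsPrimitiveRoot.finrank_adjoin_rat {K : Type*} [Field K] [CharZero K] {N : ℕ}
    (hN : 0 < N) {μ : K} (hμ : IsPrimitiveRoot μ N) :
    Module.finrank ℚ ℚ⟮μ⟯ = N.totient := by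
  rw [adjoin.finrank (hμ.isIntegral hN).tower_top, ← cyclotomic_eq_minpoly_rat hμ hN,
    natDegree_cyclotomic]

theorem IsPrimitiveRoot.totient_dvd_finrank_rat {K : Type*} [Field K] [CharZero K] {N : ℕ}
    (hN : 0 < N) {μ : K} (hμ : IsPrimitiveRoot μ N) : N.totient ∣ Module.finrank ℚ K :=
  hμ.finrank_adjoin_rat hN ▸ Dvd.intro _ (Module.finrank_mul_finrank ℚ ℚ⟮μ⟯ K)

theorem minpoly_eq_X_pow_sub_C_of_prime {F K : Type*} [Field F] [Field K] [Algebra F K] {p : ℕ}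
    (hp : p.Prime) {a : F} (ha : ∀ b : F, b ^ p ≠ a) {x : K} (hx : x ^ p = algebraMap F K a) :
    minpoly F x = X ^ p - C a :=
  (minpoly.eq_of_irreducible_of_monic (X_pow_sub_C_irreducible_of_prime hp ha) (by simp [hx])
    (monic_X_pow_sub_C a hp.ne_zero)).symm

theorem exists_isPrimitiveRoot_of_isGalois {F E : Type*} [Field F] [Field E] [Algebra F E]
    [IsGalois F E] {p : ℕ} (hp : p.Prime) {a : F} (ha : ∀ b : F, b ^ p ≠ a) {x : E}
    (hx : x ^ p = algebraMap F E a) : ∃ μ : E, IsPrimitiveRoot μ p := by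
  have hmin := minpoly_eq_X_pow_sub_C_of_prime hp ha hx
  have hsep : (X ^ p - C a).Separable := hmin ▸ Algebra.IsSeparable.isSeparable F x
  have hcard := card_rootSet_eq_natDegree (K := E) hsep (hmin ▸ Normal.splits inferInstance x)
  rw [natDegree_X_pow_sub_C] at hcard
  have hx_mem : x ∈ (X ^ p - C a).rootSet E := by
    simp [mem_rootSet, X_pow_sub_C_ne_zero hp.pos, hx]
  obtain ⟨⟨y, hy⟩, hyx⟩ := Fintype.exists_ne_of_one_lt_card (hcard ▸ hp.one_lt) ⟨x, hx_mem⟩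
  have hy' : y ^ p = algebraMap F E a := by
    simpa [mem_rootSet, X_pow_sub_C_ne_zero hp.pos, sub_eq_zero] using hy
  have ha0 : a ≠ 0 := fun h => ha 0 (by simp [h, hp.ne_zero])
  have hx0 : x ≠ 0 := by
    rintro rfl
    rw [zero_pow hp.ne_zero, eq_comm, map_eq_zero] at hx
    exact ha0 hx
  refine ⟨y / x, ?_⟩
  have h1 : (y / x) ^ p = 1 := by rw [div_pow, hx, hy', div_self (hx ▸ pow_ne_zero p hx0)]
  have h2 : y / x ≠ 1 := fun h => hyx (Subtype.ext ((div_eq_one_iff_eq hx0).mp h))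
  exact orderOf_eq_prime (hp := ⟨hp⟩) h1 h2 ▸ IsPrimitiveRoot.orderOf _

theorem pow_ne_algebraMap_of_isAbelianGalois {K : Type*} [Field K] [CharZero K]
    [IsAbelianGalois ℚ K] {p : ℕ} (hp : p.Prime) (hp2 : p ≠ 2) {a : ℚ} (ha : ∀ b : ℚ, b ^ p ≠ a)
    (b : K) : b ^ p ≠ algebraMap ℚ K a := by
  intro hb
  have : IsAbelianGalois ℚ ℚ⟮b⟯ := .tower_bot ℚ ℚ⟮b⟯ K
  have hgen : AdjoinSimple.gen ℚ b ^ p = algebraMap ℚ ℚ⟮b⟯ a := Subtype.ext (by simpa using hb)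
  obtain ⟨μ, hμ⟩ := exists_isPrimitiveRoot_of_isGalois hp ha hgen
  have hdeg : Module.finrank ℚ ℚ⟮b⟯ = p := by
    rw [adjoin.finrank (Algebra.IsIntegral.isIntegral b),
      minpoly_eq_X_pow_sub_C_of_prime hp ha hb, natDegree_X_pow_sub_C]
  have hdvd : p - 1 ∣ (p - 1) + 1 := by
    rw [Nat.sub_add_cancel hp.one_lt.le]
    simpa [Nat.totient_prime hp, hdeg] using hμ.totient_dvd_finrank_rat hp.pos
  have := Nat.dvd_one.mp ((Nat.dvd_add_right dvd_rfl).mp hdvd)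
  omega

-- The unprimed Mathlib version assumes `Algebra.IsIntegral F K`, which fails for `ℚ ⊆ ℂ`.
theorem IsPrimitiveRoot.intermediateField_adjoin_isCyclotomicExtension' {F K : Type*} [Field F]
    [Field K] [Algebra F K] {N : ℕ} [NeZero N] {ζ : K} (hζ : IsPrimitiveRoot ζ N) :
    IsCyclotomicExtension {N} F F⟮ζ⟯ := by
  change IsCyclotomicExtension {N} F F⟮ζ⟯.toSubalgebra
  rw [adjoin_simple_toSubalgebra_of_isAlgebraic
    (hζ.isIntegral (NeZero.pos N)).tower_top.isAlgebraic]
  exact hζ.adjoin_isCyclotomicExtension F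

theorem finrank_adjoin_primitiveRoot_root {K : Type*} [Field K] [CharZero K] {p : ℕ}
    (hp : p.Prime) (hp2 : p ≠ 2) {a : ℚ} (ha : ∀ b : ℚ, b ^ p ≠ a) (n : ℕ) {ζ x : K}
    (hζ : IsPrimitiveRoot ζ (p ^ n)) (hx : x ^ p ^ n = algebraMap ℚ K a) :
    Module.finrank ℚ ℚ⟮ζ, x⟯ = (p ^ n).totient * p ^ n := by
  have hpn : 0 < p ^ n := pow_pos hp.pos n
  have : NeZero (p ^ n) := .of_pos hpn
  have : IsCyclotomicExtension {p ^ n} ℚ ℚ⟮ζ⟯ := hζ.intermediateField_adjoin_isCyclotomicExtension'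
  have : IsAbelianGalois ℚ ℚ⟮ζ⟯ := IsCyclotomicExtension.isAbelianGalois {p ^ n} ℚ ℚ⟮ζ⟯
  have hirr : Irreducible (X ^ p ^ n - C (algebraMap ℚ ℚ⟮ζ⟯ a)) :=
    X_pow_sub_C_irreducible_of_prime_pow hp hp2 n (pow_ne_algebraMap_of_isAbelianGalois hp hp2 ha)
  have hmin : minpoly ℚ⟮ζ⟯ x = X ^ p ^ n - C (algebraMap ℚ ℚ⟮ζ⟯ a) :=
    (minpoly.eq_of_irreducible_of_monic hirr (by simp [hx]) (monic_X_pow_sub_C _ hpn.ne')).symm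
  have hint : IsIntegral ℚ⟮ζ⟯ x :=
    ⟨X ^ p ^ n - C (algebraMap ℚ ℚ⟮ζ⟯ a), monic_X_pow_sub_C _ hpn.ne', by simp [hx]⟩
  rw [← Set.singleton_union, ← adjoin_adjoin_left]
  change Module.finrank ℚ ℚ⟮ζ⟯⟮x⟯ = _
  rw [← Module.finrank_mul_finrank ℚ ℚ⟮ζ⟯ ℚ⟮ζ⟯⟮x⟯, adjoin.finrank hint, hmin, natDegree_X_pow_sub_C,
    hζ.finrank_adjoin_rat hpn]

theorem adjoin_rootSet_X_pow_sub_C_eq {F K : Type*} [Field F] [Field K] [Algebra F K] {N : ℕ}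
    [NeZero N] {ζ x : K} (hζ : IsPrimitiveRoot ζ N) {a : F} (ha : a ≠ 0)
    (hx : x ^ N = algebraMap F K a) : adjoin F ((X ^ N - C a).rootSet K) = adjoin F {ζ, x} := by
  have hx0 : x ≠ 0 := by
    rintro rfl
    rw [zero_pow (NeZero.ne N), eq_comm, map_eq_zero] at hx
    exact ha hx
  have hroot (y : K) : y ∈ (X ^ N - C a).rootSet K ↔ y ^ N = algebraMap F K a := by
    simp [mem_rootSet, X_pow_sub_C_ne_zero (NeZero.pos N), sub_eq_zero]
  apply le_antisymm
  · rw [adjoin_le_iff]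
    intro y hy
    have hyx : (y / x) ^ N = 1 := by
      rw [div_pow, (hroot y).mp hy, hx, div_self (hx ▸ pow_ne_zero N hx0)]
    obtain ⟨i, -, hi⟩ := hζ.eq_pow_of_pow_eq_one hyx
    rw [← div_mul_cancel₀ y hx0, ← hi]
    exact mul_mem (pow_mem (subset_adjoin F _ (Set.mem_insert ζ _)) i)
      (subset_adjoin F _ (Set.mem_insert_of_mem _ rfl))
  · rw [adjoin_le_iff, Set.insert_subset_iff, Set.singleton_subset_iff]
    have hxm : x ∈ adjoin F ((X ^ N - C a).rootSet K) := subset_adjoin F _ ((hroot x).mpr hx)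
    have hζxm : ζ * x ∈ adjoin F ((X ^ N - C a).rootSet K) :=
      subset_adjoin F _ ((hroot _).mpr (by rw [mul_pow, hζ.pow_eq_one, one_mul, hx]))
    exact ⟨mul_div_cancel_right₀ ζ hx0 ▸ div_mem hζxm hxm, hxm⟩

theorem isSplittingField_adjoin_primitiveRoot_root {F K : Type*} [Field F] [Field K]
    [Algebra F K] {N : ℕ} [NeZero N] {ζ x : K} (hζ : IsPrimitiveRoot ζ N) {a : F} (ha : a ≠ 0)
    (hx : x ^ N = algebraMap F K a) : IsSplittingField F (adjoin F {ζ, x}) (X ^ N - C a) := by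
  rw [← adjoin_rootSet_X_pow_sub_C_eq hζ ha hx]
  exact adjoin_rootSet_isSplittingField (by simpa using X_pow_sub_C_splits_of_isPrimitiveRoot hζ hx)

theorem isGalois_adjoin_primitiveRoot_root {F K : Type*} [Field F] [CharZero F] [Field K]
    [Algebra F K] {N : ℕ} [NeZero N] {ζ x : K} (hζ : IsPrimitiveRoot ζ N) {a : F} (ha : a ≠ 0)
    (hx : x ^ N = algebraMap F K a) : IsGalois F (adjoin F {ζ, x}) :=
  have := isSplittingField_adjoin_primitiveRoot_root hζ ha hx
  IsGalois.of_separable_splitting_field (separable_X_pow_sub_C a (NeZero.ne (N : F)) ha)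

theorem stmt_18_general (p n : ℕ) (hp : p.Prime) (hp2 : p ≠ 2) (hn : 1 ≤ n)
    (a : ℚ) (hpow : ∀ b : ℚ, b ^ p ≠ a)
    (w : ℝ) (hwa : w ^ (p ^ n) = (a : ℝ))
    (ζ : ℂ) (hζ : IsPrimitiveRoot ζ (p ^ n))
    (ζ1L : ↥(IntermediateField.adjoin ℚ {ζ, (w : ℂ)}))
    (hζ1L : (ζ1L : ℂ) = ζ ^ (p ^ (n - 1))) :
    (∃ S : Sylow p (↥(IntermediateField.adjoin ℚ {ζ, (w : ℂ)}) ≃ₐ[ℚ]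
        ↥(IntermediateField.adjoin ℚ {ζ, (w : ℂ)})),
      (S : Subgroup _) =
        (IntermediateField.adjoin ℚ {ζ1L} :
          IntermediateField ℚ ↥(IntermediateField.adjoin ℚ {ζ, (w : ℂ)})).fixingSubgroup) ∧
    Nat.card ↥((IntermediateField.adjoin ℚ {ζ1L} :
        IntermediateField ℚ ↥(IntermediateField.adjoin ℚ {ζ, (w : ℂ)})).fixingSubgroup) =
      p ^ (2 * n - 1) ∧
    ((IntermediateField.adjoin ℚ {ζ1L} :
        IntermediateField ℚ ↥(IntermediateField.adjoin ℚ {ζ, (w : ℂ)})).fixingSubgroup).index =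
      p - 1 := by
  have hpn : 0 < p ^ n := pow_pos hp.pos n
  have ha0 : a ≠ 0 := fun h => hpow 0 (by simp [h, hp.ne_zero])
  have : NeZero (p ^ n) := .of_pos hpn
  have hwa' : (w : ℂ) ^ p ^ n = algebraMap ℚ ℂ a := by rw [eq_ratCast]; exact_mod_cast hwa
  have : IsGalois ℚ ℚ⟮ζ, (w : ℂ)⟯ := isGalois_adjoin_primitiveRoot_root hζ ha0 hwa'
  have hdeg : Module.finrank ℚ ℚ⟮ζ, (w : ℂ)⟯ = (p ^ n).totient * p ^ n :=
    finrank_adjoin_primitiveRoot_root hp hp2 hpow n hζ hwa'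
  have : FiniteDimensional ℚ ℚ⟮ζ, (w : ℂ)⟯ :=
    Module.finite_of_finrank_pos (by rw [hdeg]; positivity)
  have hζ1 : IsPrimitiveRoot ζ1L p :=
    (hζ1L ▸ hζ.pow hpn (by rw [← pow_succ, Nat.sub_add_cancel hn])).of_map_of_injective
      (adjoin ℚ {ζ, (w : ℂ)}).val.injective
  have hindex : (adjoin ℚ {ζ1L}).fixingSubgroup.index = p - 1 := by
    rw [← finrank_eq_fixingSubgroup_index, hζ1.finrank_adjoin_rat hp.pos, Nat.totient_prime hp]
  have hcard : Nat.card (adjoin ℚ {ζ1L}).fixingSubgroup = p ^ (2 * n - 1) := by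
    have h := (adjoin ℚ {ζ1L}).fixingSubgroup.card_mul_index
    rw [hindex, IsGalois.card_aut_eq_finrank, hdeg, Nat.totient_prime_pow hp hn] at h
    rw [show 2 * n - 1 = n - 1 + n by omega, pow_add]
    exact Nat.eq_of_mul_eq_mul_right (Nat.sub_pos_of_lt hp.one_lt) (h.trans (by ring))
  have : Fact p.Prime := ⟨hp⟩
  refine ⟨⟨(IsPGroup.of_card hcard).toSylow ?_, rfl⟩, hcard, hindex⟩
  rw [hindex]
  exact Nat.not_dvd_of_pos_of_lt (Nat.sub_pos_of_lt hp.one_lt) (Nat.sub_lt hp.pos one_pos)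

/-- The subgroup `Gal(L/ℚ(ζ_1))` of `Gal(L/ℚ)` consisting of the automorphisms
fixing `ζ_1 = ζ^{p^{n−1}}` is a Sylow `p`-subgroup of `Gal(L/ℚ)`; it has order `p^{2n−1}` and
index `p−1`.  Here `L = ℚ(ζ, w)` is the splitting field of `X^{p^n} − a` over ℚ. -/
theorem stmt_18 (p n : ℕ) (hp : p.Prime) (hp2 : p ≠ 2) (hn : 1 ≤ n)
    (a : ℚ) (ha : 0 < a) (hpow : ∀ b : ℚ, b ^ p ≠ a)
    (w : ℝ) (hw : 0 < w) (hwa : w ^ (p ^ n) = (a : ℝ))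
    (ζ : ℂ) (hζ : IsPrimitiveRoot ζ (p ^ n))
    (ζ1L : ↥(IntermediateField.adjoin ℚ {ζ, (w : ℂ)}))
    (hζ1L : (ζ1L : ℂ) = ζ ^ (p ^ (n - 1))) :
    (∃ S : Sylow p (↥(IntermediateField.adjoin ℚ {ζ, (w : ℂ)}) ≃ₐ[ℚ]
        ↥(IntermediateField.adjoin ℚ {ζ, (w : ℂ)})),
      (S : Subgroup _) =
        (IntermediateField.adjoin ℚ {ζ1L} :
          IntermediateField ℚ ↥(IntermediateField.adjoin ℚ {ζ, (w : ℂ)})).fixingSubgroup) ∧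
    Nat.card ↥((IntermediateField.adjoin ℚ {ζ1L} :
        IntermediateField ℚ ↥(IntermediateField.adjoin ℚ {ζ, (w : ℂ)})).fixingSubgroup) =
      p ^ (2 * n - 1) ∧
    ((IntermediateField.adjoin ℚ {ζ1L} :
        IntermediateField ℚ ↥(IntermediateField.adjoin ℚ {ζ, (w : ℂ)})).fixingSubgroup).index =
      p - 1 :=
  stmt_18_general p n hp hp2 hn a hpow w hwa ζ hζ ζ1L hζ1L
end
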